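/- With the same instance as before (L-weights {a_1, …, a_m, M}, one F-item of weight M + 1, capacity c = M + b, where Σ a_i = 2b and M > 2b): if no subset T ⊆ {1,…,m} satisfies Σ_{i∈T} a_i = b, then the leader's objective-control value V(L, F, c) is at most b − 1. -/

import Mathlib

/-- Greedy packing: total packed weight. -/
def greedyPack : List ℕ → ℕ → ℕ
  | [], _ => 0
  | w :: ws, C => if w ≤ C then w + greedyPack ws (C - w) else greedyPack ws C

/-!
If greedy can still pack the follower's item `M + 1`, then `w(S₂) ≤ c - (M + 1) = b - 1`.
Otherwise `w(S₁) ≥ b`, and as no sub-multiset of the `a_i` weighs exactly `b`, `w(S₁) > b`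
unless `S₁` contains the item `M`. If it does, `S₂` consists of `a_i`'s and weighs at most `b`,
hence less than `b`. If it does not, `S₂` cannot contain `M` either (`w(S₁) + M > c`), so
`S₁ + S₂` consists of `a_i`'s and `w(S₂) ≤ 2b - w(S₁) < b`.
-/

lemma greedyPack_singleton (w C : ℕ) : greedyPack [w] C = if w ≤ C then w else 0 := by
  simp [greedyPack]

lemma Multiset.exists_le_map_eq_of_le_map {α β : Type*} {f : α → β} {t : Multiset α}
    {u : Multiset β} (h : u ≤ t.map f) : ∃ v ≤ t, v.map f = u := by
  induction u using Quotient.inductionOn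
  induction t using Quotient.inductionOn with | h l =>
  obtain ⟨l₁, hperm, hsub⟩ := h
  obtain ⟨l', hl', rfl⟩ := List.sublist_map_iff.mp hsub
  exact ⟨l', hl'.subperm, Quotient.sound hperm⟩

lemma Finset.exists_subset_sum_eq_of_le_map {ι M : Type*} [AddCommMonoid M] {a : ι → M}
    {s : Finset ι} {u : Multiset M} (h : u ≤ s.val.map a) :
    ∃ T ⊆ s, ∑ i ∈ T, a i = u.sum := by
  obtain ⟨v, hv, rfl⟩ := Multiset.exists_le_map_eq_of_le_map h
  exact ⟨⟨v, Multiset.nodup_of_le hv s.nodup⟩, Multiset.subset_of_le hv, rfl⟩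

lemma Multiset.le_of_add_le_cons_of_notMem {α : Type*} {s t A : Multiset α} {x : α}
    (h : s + t ≤ x ::ₘ A) (hx : x ∉ s) : s ≤ A :=
  (Multiset.le_cons_of_notMem hx).mp ((Multiset.le_add_right s t).trans h)

lemma sum_lt_of_add_le_cons {A t₁ t₂ : Multiset ℕ} {b M : ℕ} (hA : A.sum ≤ 2 * b)
    (hno : ∀ u ≤ A, u.sum ≠ b) (hle : t₁ + t₂ ≤ M ::ₘ A)
    (h₁ : b ≤ t₁.sum) (h₁₂ : t₁.sum + t₂.sum ≤ M + b) : t₂.sum < b := by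
  by_cases hM₁ : M ∈ t₁
  · obtain ⟨t₁', rfl⟩ := Multiset.exists_cons_of_mem hM₁
    rw [Multiset.cons_add, Multiset.cons_le_cons_iff] at hle
    have hne := hno t₂ ((Multiset.le_add_left t₂ t₁').trans hle)
    rw [Multiset.sum_cons] at h₁₂
    omega
  have hne := hno t₁ (Multiset.le_of_add_le_cons_of_notMem hle hM₁)
  by_cases hM₂ : M ∈ t₂
  · have := Multiset.le_sum_of_mem hM₂
    omega
  · have hM₁₂ : M ∉ t₁ + t₂ := by simp [hM₁, hM₂]
    obtain ⟨r, hr⟩ := Multiset.le_iff_exists_add.mp ((Multiset.le_cons_of_notMem hM₁₂).mp hle)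
    have : t₁.sum + t₂.sum + r.sum = A.sum := by rw [hr, Multiset.sum_add, Multiset.sum_add]
    omega

theorem objControl_no_general (m b M : ℕ) (a : Fin m → ℕ)
    (hsum : ∑ i, a i = 2 * b)
    (hno : ¬ ∃ T : Finset (Fin m), ∑ i ∈ T, a i = b) :
    ∀ t1 t2 : Multiset ℕ,
      t1 + t2 ≤ (M ::ₘ Finset.univ.val.map a : Multiset ℕ) →
      t1.sum ≤ M + b →
      t1.sum + greedyPack [M + 1] (M + b - t1.sum) + t2.sum ≤ M + b →
      t2.sum ≤ b - 1 := by
  intro t1 t2 hle _ hpack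
  have hnoA : ∀ u ≤ Finset.univ.val.map a, u.sum ≠ b := fun u hu hub => by
    obtain ⟨T, -, hT⟩ := Finset.exists_subset_sum_eq_of_le_map hu
    exact hno ⟨T, hT.trans hub⟩
  rw [greedyPack_singleton] at hpack
  split_ifs at hpack with hfit
  · omega
  · have := sum_lt_of_add_le_cons hsum.le hnoA hle (by omega) (by omega)
    omega

/-- If no subset of the `a_i` sums to `b`, then the leader's objective-control
value on the instance with L-weights `{a_1,…,a_m, M}`, one F-item of weight
`M+1`, and capacity `c = M + b`, is at most `b - 1`. -/
theorem objControl_no (m b M : ℕ) (a : Fin m → ℕ) (hpos : ∀ i, 0 < a i)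
    (hb : 1 ≤ b) (hsum : ∑ i, a i = 2 * b) (hM : 2 * b < M)
    (hno : ¬ ∃ T : Finset (Fin m), ∑ i ∈ T, a i = b) :
    ∀ t1 t2 : Multiset ℕ,
      t1 + t2 ≤ (M ::ₘ Finset.univ.val.map a : Multiset ℕ) →
      t1.sum ≤ M + b →
      t1.sum + greedyPack [M + 1] (M + b - t1.sum) + t2.sum ≤ M + b →
      t2.sum ≤ b - 1 :=
  objControl_no_general m b M a hsum hno
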